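/- If à is the renormalized adjacency matrix of a connected graph with self-loops added (à = D^{-1/2}(A+I)D^{-1/2}), then every eigenvalue λ of à satisfies λ > -1; in particular combined with λ ≤ 1, all eigenvalues lie in (-1, 1]. -/

import Mathlib

open Finset Matrix

/-- For a connected graph, every eigenvalue `μ` of the renormalized adjacency
matrix `Ã = D^{-1/2}(A+I)D^{-1/2}` (self-loops added) satisfies `-1 < μ`;
combined with `μ ≤ 1`, all eigenvalues lie in `(-1, 1]`. -/
theorem renormalized_adjacency_eigenvalues_gt_neg_one
    {n : ℕ} (G : SimpleGraph (Fin n)) [DecidableRel G.Adj]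
    (hconn : G.Connected) :
    let A : Matrix (Fin n) (Fin n) ℝ := G.adjMatrix ℝ
    let Dinvsqrt : Matrix (Fin n) (Fin n) ℝ :=
      Matrix.diagonal fun i => (Real.sqrt (1 + (G.degree i : ℝ)))⁻¹
    let Atilde : Matrix (Fin n) (Fin n) ℝ := Dinvsqrt * (A + 1) * Dinvsqrt
    ∀ (μ : ℝ) (x : Fin n → ℝ), x ≠ 0 → Atilde.mulVec x = μ • x →
      -1 < μ ∧ μ ≤ 1 := by
  intro A Dinvsqrt Atilde μ x hx heig
  classical
  set d : Fin n → ℝ := fun i => 1 + (G.degree i : ℝ) with hd_def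
  have hd : ∀ i, 0 < d i := fun i => by
    have : (0:ℝ) ≤ (G.degree i : ℝ) := Nat.cast_nonneg _
    simp only [hd_def]; linarith
  set s : Fin n → ℝ := fun i => (Real.sqrt (d i))⁻¹ with hs_def
  have hs_pos : ∀ i, 0 < s i := fun i =>
    inv_pos.mpr (Real.sqrt_pos.mpr (hd i))
  have hss : ∀ i, s i * s i * d i = 1 := by
    intro i
    have h := Real.mul_self_sqrt (le_of_lt (hd i))
    have hsq : Real.sqrt (d i) ≠ 0 := ne_of_gt (Real.sqrt_pos.mpr (hd i))
    simp only [hs_def]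
    field_simp
    rw [Real.sq_sqrt (le_of_lt (hd i))]
  set B : Fin n → Fin n → ℝ := fun i j => (A + 1) i j with hB_def
  have hB_nonneg : ∀ i j, 0 ≤ B i j := by
    intro i j
    simp only [hB_def, Matrix.add_apply, Matrix.one_apply, SimpleGraph.adjMatrix_apply, A]
    split_ifs <;> norm_num
  have hBsymm : ∀ i j, B i j = B j i := by
    intro i j
    simp only [hB_def, Matrix.add_apply, Matrix.one_apply, SimpleGraph.adjMatrix_apply, A]
    have h1 : G.Adj i j ↔ G.Adj j i := G.adj_comm i j
    have h2 : (i = j) ↔ (j = i) := eq_comm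
    simp only [h1, h2]
  have hBdiag : ∀ i, B i i = 1 := by
    intro i
    simp [hB_def, Matrix.add_apply, Matrix.one_apply, A]
  have hrow : ∀ i, ∑ j, B i j = d i := by
    intro i
    simp only [hB_def, Matrix.add_apply, Matrix.one_apply, SimpleGraph.adjMatrix_apply, A]
    rw [Finset.sum_add_distrib]
    rw [Finset.sum_ite_eq univ i (fun _ => (1:ℝ))]
    simp only [Finset.mem_univ, if_true]
    have : ∑ j, (if G.Adj i j then (1:ℝ) else 0) = (G.degree i : ℝ) := by
      rw [Finset.sum_boole]
      congr 1
      rw [SimpleGraph.degree]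
      congr 1
      ext j
      simp [SimpleGraph.mem_neighborFinset]
    rw [this, hd_def]
    ring
  have hcol : ∀ j, ∑ i, B i j = d j := by
    intro j
    calc ∑ i, B i j = ∑ i, B j i := Finset.sum_congr rfl fun i _ => hBsymm i j
    _ = d j := hrow j
  set y : Fin n → ℝ := fun i => s i * x i with hy_def
  have hxy : ∀ i, x i * x i = d i * (y i * y i) := by
    intro i
    have : d i * (y i * y i) = (s i * s i * d i) * (x i * x i) := by
      simp only [hy_def]; ring
    rw [this, hss i, one_mul]
  set N : ℝ := ∑ i, d i * (y i * y i) with hN_def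
  set Q : ℝ := ∑ i, ∑ j, B i j * y i * y j with hQ_def
  have hNx : ∑ i, x i * x i = N := Finset.sum_congr rfl fun i _ => hxy i
  have hN_pos : 0 < N := by
    rw [← hNx]
    obtain ⟨i, hi⟩ := Function.ne_iff.mp hx
    exact Finset.sum_pos' (fun j _ => mul_self_nonneg _)
      ⟨i, Finset.mem_univ i, mul_self_pos.mpr hi⟩
  -- eigen equation gives Q = μ * N
  have hAt : ∀ i j, Atilde i j = s i * (B i j * s j) := by
    intro i j
    show (Dinvsqrt * (A + 1) * Dinvsqrt) i j = _
    rw [Matrix.mul_diagonal, Matrix.diagonal_mul]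
    simp only [hB_def, hs_def, hd_def]
    ring
  have hQN : Q = μ * N := by
    have h1 : x ⬝ᵥ Atilde.mulVec x = μ * (∑ i, x i * x i) := by
      rw [heig]
      simp only [dotProduct, Pi.smul_apply, smul_eq_mul, Finset.mul_sum]
      exact Finset.sum_congr rfl fun i _ => by ring
    have h2 : x ⬝ᵥ Atilde.mulVec x = Q := by
      simp only [hQ_def, dotProduct, Matrix.mulVec, Finset.mul_sum]
      refine Finset.sum_congr rfl fun i _ => Finset.sum_congr rfl fun j _ => ?_
      rw [hAt i j]
      simp only [hy_def]
      ring
    rw [← h2, h1, hNx]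
  -- double sum identities
  have hT1 : ∑ i, ∑ j, B i j * (y i * y i) = N := by
    rw [hN_def]
    refine Finset.sum_congr rfl fun i _ => ?_
    rw [← Finset.sum_mul, hrow i]
  have hT2 : ∑ i, ∑ j, B i j * (y j * y j) = N := by
    rw [Finset.sum_comm, hN_def]
    refine Finset.sum_congr rfl fun j _ => ?_
    rw [← Finset.sum_mul, hcol j]
  have hplus : ∑ i, ∑ j, B i j * (y i + y j)^2 = 2*N + 2*Q := by
    have : ∀ i, ∑ j, B i j * (y i + y j)^2
        = ∑ j, (B i j * (y i * y i) + B i j * (y j * y j) + 2 * (B i j * y i * y j)) :=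
      fun i => Finset.sum_congr rfl fun j _ => by ring
    simp only [this, Finset.sum_add_distrib]
    rw [hT1, hT2, hQ_def]
    rw [show ∑ i, ∑ j, (2:ℝ) * (B i j * y i * y j) = 2 * ∑ i, ∑ j, B i j * y i * y j from by
      rw [Finset.mul_sum]; exact Finset.sum_congr rfl fun i _ => by rw [Finset.mul_sum]]
    ring
  have hminus : ∑ i, ∑ j, B i j * (y i - y j)^2 = 2*N - 2*Q := by
    have : ∀ i, ∑ j, B i j * (y i - y j)^2
        = ∑ j, (B i j * (y i * y i) + B i j * (y j * y j) - 2 * (B i j * y i * y j)) :=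
      fun i => Finset.sum_congr rfl fun j _ => by ring
    simp only [this, Finset.sum_sub_distrib, Finset.sum_add_distrib]
    rw [hT1, hT2, hQ_def]
    rw [show ∑ i, ∑ j, (2:ℝ) * (B i j * y i * y j) = 2 * ∑ i, ∑ j, B i j * y i * y j from by
      rw [Finset.mul_sum]; exact Finset.sum_congr rfl fun i _ => by rw [Finset.mul_sum]]
    ring
  -- μ ≤ 1
  have hle : μ ≤ 1 := by
    have h0 : 0 ≤ ∑ i, ∑ j, B i j * (y i - y j)^2 :=
      Finset.sum_nonneg fun i _ => Finset.sum_nonneg fun j _ =>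
        mul_nonneg (hB_nonneg i j) (sq_nonneg _)
    rw [hminus] at h0
    nlinarith [hN_pos, hQN]
  -- -1 < μ
  have hgt : -1 < μ := by
    obtain ⟨i0, hi0⟩ := Function.ne_iff.mp hx
    have hy0 : y i0 ≠ 0 := mul_ne_zero (ne_of_gt (hs_pos i0)) hi0
    have hlow : ∑ i, 4 * (y i * y i) ≤ ∑ i, ∑ j, B i j * (y i + y j)^2 := by
      refine Finset.sum_le_sum fun i _ => ?_
      have hsingle : B i i * (y i + y i)^2 ≤ ∑ j, B i j * (y i + y j)^2 :=
        Finset.single_le_sum (f := fun j => B i j * (y i + y j)^2)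
          (fun j _ => mul_nonneg (hB_nonneg i j) (sq_nonneg _)) (Finset.mem_univ i)
      rw [hBdiag i] at hsingle
      nlinarith [hsingle]
    have hpos : 0 < ∑ i, 4 * (y i * y i) :=
      Finset.sum_pos' (fun j _ => by nlinarith [mul_self_nonneg (y j)])
        ⟨i0, Finset.mem_univ i0, by nlinarith [mul_self_pos.mpr hy0]⟩
    rw [hplus] at hlow
    nlinarith [hN_pos, hQN]
  exact ⟨hgt, hle⟩
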